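/- Fix integers r ≥ 1, n ≥ 2 and δ ≥ n−1. Then the sequence ℓ ↦ (r+1)! · π̄(r,n,δℓ) / ℓ^{r+1} converges, as ℓ → ∞, to δ^{r+1}/(n−1)^r. -/

import Mathlib

/-!
Write `q = n - 1` and `N = q a + s` with `0 ≤ s < q`. Both binomial coefficients in `π̄(r, n, N)`
are rising factorials divided by `(r + 1)!`, and factoring out their common part gives
`(r + 1)! π̄(r, n, N) = (a + 1) (a + 2) ⋯ (a + r) · (N + 1 + (s + 1) r)`.
With `N = δ ℓ` the first factor is `(δ ℓ / q)^r + O(ℓ^(r-1))` and the second is `δ ℓ + O(1)`.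
-/

open Filter Topology
open scoped Nat

def pibar (r n δ : ℕ) : ℕ :=
  let ρ := δ / (n - 1)
  let m := δ - ρ * (n - 1) + 1
  let m' := n - 1 - m
  m * Nat.choose (r + ρ + 1) (r + 1) + m' * Nat.choose (r + ρ) (r + 1)

lemma factorial_mul_choose_add_succ (r a : ℕ) :
    (r + 1)! * (r + a + 1).choose (r + 1) = (a + 1).ascFactorial r * (a + 1 + r) := by
  rw [Nat.mul_comm _ (a + 1 + r), ← Nat.ascFactorial_succ, Nat.ascFactorial_eq_factorial_mul_choose,
    Nat.add_comm r a, Nat.add_assoc]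

lemma factorial_mul_choose_add (r a : ℕ) :
    (r + 1)! * (r + a).choose (r + 1) = a * (a + 1).ascFactorial r := by
  have h := Nat.ascFactorial_mul_ascFactorial a 1 r
  rw [Nat.add_comm 1 r, Nat.ascFactorial_eq_factorial_mul_choose' a (r + 1), ← Nat.add_assoc,
    Nat.add_sub_cancel, Nat.add_comm a r] at h
  simpa [Nat.ascFactorial_succ, Nat.add_comm 1 a] using h.symm

lemma factorial_mul_pibar (r n N : ℕ) (hn : 2 ≤ n) :
    (r + 1)! * pibar r n N
      = (N / (n - 1) + 1).ascFactorial r * (N + 1 + (N % (n - 1) + 1) * r) := by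
  set q := n - 1
  have hmod : N - N / q * q = N % q := by rw [Nat.mod_eq_sub_mul_div, Nat.mul_comm]
  have hs : N % q + 1 ≤ q := Nat.mod_lt N (by omega)
  have hN : N = q * (N / q) + N % q := (Nat.div_add_mod N q).symm
  simp only [pibar]
  rw [hmod, Nat.mul_add, Nat.mul_left_comm, Nat.mul_left_comm _ (q - _),
    factorial_mul_choose_add_succ, factorial_mul_choose_add]
  generalize N / q = a at *
  generalize N % q = s at *
  generalize (a + 1).ascFactorial r = P
  subst hN
  zify [hs]
  ring

lemma abs_natCast_div_sub_div_le (N q : ℕ) : |((N / q : ℕ) : ℝ) - N / q| ≤ 1 := by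
  have hlow := Nat.sub_one_lt_floor ((N : ℝ) / q)
  rw [Nat.floor_div_eq_div] at hlow
  rw [abs_le]
  constructor <;> linarith [Nat.cast_div_le (α := ℝ) (m := N) (n := q)]

lemma tendsto_div_natCast_of_abs_sub_mul_le {f : ℕ → ℝ} {c C : ℝ}
    (h : ∀ᶠ ℓ in atTop, |f ℓ - c * ℓ| ≤ C) : Tendsto (fun ℓ ↦ f ℓ / ℓ) atTop (𝓝 c) := by
  rw [tendsto_iff_norm_sub_tendsto_zero]
  refine squeeze_zero' (.of_forall fun _ ↦ norm_nonneg _) ?_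
    (tendsto_const_div_atTop_nhds_zero_nat C)
  filter_upwards [h, eventually_gt_atTop 0] with ℓ hℓ hpos
  have hpos' : (0 : ℝ) < ℓ := Nat.cast_pos.mpr hpos
  rw [Real.norm_eq_abs, show f ℓ / ℓ - c = (f ℓ - c * ℓ) / ℓ by field_simp, abs_div,
    Nat.abs_cast]
  gcongr

lemma tendsto_ascFactorial_div_pow {a : ℕ → ℕ} {c : ℝ} (k : ℕ)
    (ha : Tendsto (fun ℓ ↦ (a ℓ : ℝ) / ℓ) atTop (𝓝 c)) :
    Tendsto (fun ℓ ↦ ((a ℓ + 1).ascFactorial k : ℝ) / ℓ ^ k) atTop (𝓝 (c ^ k)) := by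
  have hshift (d : ℕ) : Tendsto (fun ℓ ↦ ((a ℓ + d : ℕ) : ℝ) / ℓ) atTop (𝓝 c) := by
    simpa [add_div] using ha.add (tendsto_const_div_atTop_nhds_zero_nat (d : ℝ))
  refine tendsto_of_tendsto_of_tendsto_of_le_of_le ((hshift 1).pow k) ((hshift k).pow k)
    (fun ℓ ↦ ?_) (fun ℓ ↦ ?_)
  all_goals
    rw [div_pow]
    gcongr
    push_cast
  · exact_mod_cast Nat.pow_succ_le_ascFactorial _ _
  · exact_mod_cast Nat.ascFactorial_le_pow_add _ _

theorem stmt_6_general (r n δ : ℕ) (hn : 2 ≤ n) :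
    Tendsto (fun ℓ : ℕ =>
        ((Nat.factorial (r + 1) * pibar r n (δ * ℓ) : ℕ) : ℝ) / (ℓ : ℝ) ^ (r + 1))
      atTop (nhds ((δ : ℝ) ^ (r + 1) / ((n - 1 : ℕ) : ℝ) ^ r)) := by
  set q := n - 1
  have hfloor : Tendsto (fun ℓ : ℕ ↦ ((δ * ℓ / q : ℕ) : ℝ) / ℓ) atTop (𝓝 (δ / q)) :=
    tendsto_div_natCast_of_abs_sub_mul_le (C := 1) <| .of_forall fun ℓ ↦ by
      simpa [mul_div_right_comm] using abs_natCast_div_sub_div_le (δ * ℓ) q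
  have hlinear : Tendsto (fun ℓ : ℕ ↦ ((δ * ℓ + 1 + (δ * ℓ % q + 1) * r : ℕ) : ℝ) / ℓ)
      atTop (𝓝 δ) :=
    tendsto_div_natCast_of_abs_sub_mul_le (C := 1 + q * r) <| .of_forall fun ℓ ↦ by
      have hs : ((δ * ℓ % q : ℕ) : ℝ) + 1 ≤ q := by exact_mod_cast Nat.mod_lt _ (by omega)
      push_cast
      rw [add_assoc, add_sub_cancel_left, abs_of_nonneg (by positivity)]
      nlinarith [(r.cast_nonneg : (0 : ℝ) ≤ r)]
  rw [show (δ : ℝ) ^ (r + 1) / (q : ℝ) ^ r = (δ / q) ^ r * δ by rw [div_pow, pow_succ]; ring]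
  refine ((tendsto_ascFactorial_div_pow r hfloor).mul hlinear).congr fun ℓ ↦ ?_
  rw [factorial_mul_pibar r n (δ * ℓ) hn, pow_succ, Nat.cast_mul, mul_div_mul_comm]

theorem stmt_6 (r n δ : ℕ) (hr : 1 ≤ r) (hn : 2 ≤ n) (hδ : n - 1 ≤ δ) :
    Tendsto (fun ℓ : ℕ =>
        ((Nat.factorial (r + 1) * pibar r n (δ * ℓ) : ℕ) : ℝ) / (ℓ : ℝ) ^ (r + 1))
      atTop (nhds ((δ : ℝ) ^ (r + 1) / ((n - 1 : ℕ) : ℝ) ^ r)) :=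
  stmt_6_general r n δ hn
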